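/- In the setting of the previous lemma (𝓑 a bounding class; S, T free G-sets with weights w_S, w_T; S/G finite with weight-minimizing orbit representatives; constants D₁, D₂, D₃ as before; V = ℂ[S], W = ℂ[T] with weighted ℓ¹-seminorms ‖·‖_λ), let W₀ ⊆ W be a G-submodule and W'' = W/W₀ the quotient, equipped for each λ ∈ 𝓑 with the filling seminorm ‖u‖_{f,λ} = inf{‖v‖_λ : v ∈ W, π(v) = u}, where π : W → W'' is the projection. Then every G-equivariant linear map 𝔥 : V → W'' is 𝓑-bounded: for every λ ∈ 𝓑 there exists λ' ∈ 𝓑 with ‖𝔥(v)‖_{f,λ} ≤ ‖v‖_{λ'} for all v ∈ V. -/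

import Mathlib

open scoped BigOperators

/-- A bounding class: a set of non-decreasing positive functions on `[0,∞)`
containing the constant function `1`, weakly closed under non-negative rational
linear combinations and under right composition with affine functions with
non-negative rational coefficients. -/
structure BoundingClass where
  carrier : Set (ℝ → ℝ)
  mono : ∀ f ∈ carrier, ∀ x y : ℝ, 0 ≤ x → x ≤ y → f x ≤ f y
  pos : ∀ f ∈ carrier, ∀ x : ℝ, 0 ≤ x → 0 < f x
  one_mem : (fun _ => (1 : ℝ)) ∈ carrier
  lin_comb : ∀ (n : ℕ) (f : Fin n → (ℝ → ℝ)) (q : Fin n → ℚ),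
    (∀ i, f i ∈ carrier) → (∀ i, 0 ≤ q i) →
    ∃ g ∈ carrier, ∀ x : ℝ, 0 ≤ x → ∑ i, (q i : ℝ) * f i x < g x
  comp_lin : ∀ f ∈ carrier, ∀ a b : ℚ, 0 ≤ a → 0 ≤ b →
    ∃ h ∈ carrier, ∀ x : ℝ, 0 ≤ x → f ((a : ℝ) * x + (b : ℝ)) < h x

/-- The weighted `ℓ¹`-seminorm `‖Σ α_z z‖_λ = Σ |α_z| · λ (w z)` on `ℂ[Z]`. -/
noncomputable def wSeminorm {Z : Type*} (w : Z → ℝ) (lam : ℝ → ℝ) (x : Z →₀ ℂ) : ℝ :=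
  x.sum fun z c => ‖c‖ * lam (w z)

/-- The filling seminorm `‖u‖_{f,λ} = inf {‖v‖_λ | π v = u}` on the quotient
`W'' = ℂ[T]/W₀`. -/
noncomputable def fillSeminorm {T : Type*} (wT : T → ℝ) (lam : ℝ → ℝ)
    (W₀ : Submodule ℂ (T →₀ ℂ)) (u : (T →₀ ℂ) ⧸ W₀) : ℝ :=
  sInf {r : ℝ | ∃ v : T →₀ ℂ, Submodule.Quotient.mk v = u ∧ wSeminorm wT lam v = r}

/-!
Lift `𝔥 (s j)` to some `x j ∈ ℂ[T]` for each orbit representative. By equivariance `g • x j`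
lifts `𝔥 (g • s j)`, and since `w_T (g • t) ≤ D₁ L g + w_T t` with `L g` affine in
`w_S (g • s j)`, its `λ`-weight is at most `‖x j‖₁ · λ (a · w_S (g • s j) + b)`, which the closure
properties of `𝓑` dominate by some `λ_j (w_S (g • s j))`. One `λ' ∈ 𝓑` above the finitely many
`λ_j` then bounds the lifts of all basis vectors, and extending them linearly lifts `𝔥 v` with
weight at most `‖v‖_{λ'}`.
-/

namespace BoundingClass

variable (B : BoundingClass)

theorem exists_forall_le {n : ℕ} (f : Fin n → ℝ → ℝ) (hf : ∀ i, f i ∈ B.carrier) :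
    ∃ g ∈ B.carrier, ∀ i x, 0 ≤ x → f i x ≤ g x := by
  obtain ⟨g, hg, hlt⟩ := B.lin_comb n f (fun _ => 1) hf (fun _ => zero_le_one)
  refine ⟨g, hg, fun i x hx => ?_⟩
  have hsum : f i x ≤ ∑ k, f k x :=
    Finset.single_le_sum (fun k _ => (B.pos _ (hf k) x hx).le) (Finset.mem_univ i)
  exact hsum.trans (by simpa using (hlt x hx).le)

theorem exists_const_mul_le {f : ℝ → ℝ} (hf : f ∈ B.carrier) (c : ℝ) :
    ∃ g ∈ B.carrier, ∀ x, 0 ≤ x → c * f x ≤ g x := by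
  obtain ⟨q, hq⟩ := exists_rat_gt (max c 0)
  have hq0 : (0 : ℚ) ≤ q := by exact_mod_cast ((le_max_right c 0).trans hq.le)
  obtain ⟨g, hg, hlt⟩ := B.lin_comb 1 (fun _ => f) (fun _ => q) (fun _ => hf) (fun _ => hq0)
  refine ⟨g, hg, fun x hx => ?_⟩
  have hcq : c * f x ≤ q * f x :=
    mul_le_mul_of_nonneg_right ((le_max_left c 0).trans hq.le) (B.pos f hf x hx).le
  exact hcq.trans (by simpa using (hlt x hx).le)

theorem exists_comp_le_of_le_affine {f : ℝ → ℝ} (hf : f ∈ B.carrier) (a b : ℝ) :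
    ∃ h ∈ B.carrier, ∀ x, 0 ≤ x → ∀ y, 0 ≤ y → y ≤ a * x + b → f y ≤ h x := by
  obtain ⟨qa, hqa⟩ := exists_rat_gt (max a 0)
  obtain ⟨qb, hqb⟩ := exists_rat_gt (max b 0)
  have hqa0 : (0 : ℚ) ≤ qa := by exact_mod_cast ((le_max_right a 0).trans hqa.le)
  have hqb0 : (0 : ℚ) ≤ qb := by exact_mod_cast ((le_max_right b 0).trans hqb.le)
  obtain ⟨h, hh, hlt⟩ := B.comp_lin f hf qa qb hqa0 hqb0
  refine ⟨h, hh, fun x hx y hy hyx => (B.mono f hf y _ hy ?_).trans (hlt x hx).le⟩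
  have ha : a * x ≤ qa * x := mul_le_mul_of_nonneg_right ((le_max_left a 0).trans hqa.le) hx
  linarith [le_max_left b 0]

end BoundingClass

section WeightedSeminorm

variable {Z Z' : Type*} {w : Z → ℝ} {lam : ℝ → ℝ}

theorem wSeminorm_nonneg (hlam : ∀ z, 0 ≤ lam (w z)) (x : Z →₀ ℂ) : 0 ≤ wSeminorm w lam x :=
  Finset.sum_nonneg fun z _ => mul_nonneg (norm_nonneg _) (hlam z)

theorem wSeminorm_zero : wSeminorm w lam (0 : Z →₀ ℂ) = 0 :=
  Finsupp.sum_zero_index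

theorem wSeminorm_eq_sum (x : Z →₀ ℂ) {A : Finset Z} (hA : x.support ⊆ A) :
    wSeminorm w lam x = ∑ z ∈ A, ‖x z‖ * lam (w z) :=
  Finsupp.sum_of_support_subset x hA _ fun z _ => by simp

theorem wSeminorm_add_le (hlam : ∀ z, 0 ≤ lam (w z)) (x y : Z →₀ ℂ) :
    wSeminorm w lam (x + y) ≤ wSeminorm w lam x + wSeminorm w lam y := by
  classical
  rw [wSeminorm_eq_sum (x + y) Finsupp.support_add, wSeminorm_eq_sum x Finset.subset_union_left,
    wSeminorm_eq_sum y Finset.subset_union_right, ← Finset.sum_add_distrib]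
  exact Finset.sum_le_sum fun z _ => by
    rw [Finsupp.add_apply, ← add_mul]
    exact mul_le_mul_of_nonneg_right (norm_add_le _ _) (hlam z)

theorem wSeminorm_smul (c : ℂ) (x : Z →₀ ℂ) :
    wSeminorm w lam (c • x) = ‖c‖ * wSeminorm w lam x := by
  classical
  rw [wSeminorm_eq_sum (c • x) Finsupp.support_smul, wSeminorm_eq_sum x subset_rfl,
    Finset.mul_sum]
  exact Finset.sum_congr rfl fun z _ => by
    rw [Finsupp.smul_apply, smul_eq_mul, norm_mul, mul_assoc]

theorem wSeminorm_mapDomain {w : Z' → ℝ} {e : Z → Z'} (he : Function.Injective e)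
    (x : Z →₀ ℂ) : wSeminorm w lam (Finsupp.mapDomain e x) = wSeminorm (w ∘ e) lam x :=
  Finsupp.sum_mapDomain_index_inj he

theorem wSeminorm_le_mul {x : Z →₀ ℂ} {c : ℝ} (h : ∀ z ∈ x.support, lam (w z) ≤ c) :
    wSeminorm w lam x ≤ (x.sum fun _ a => ‖a‖) * c := by
  rw [wSeminorm, Finsupp.sum, Finsupp.sum, Finset.sum_mul]
  exact Finset.sum_le_sum fun z hz => mul_le_mul_of_nonneg_left (h z hz) (norm_nonneg _)

theorem wSeminorm_linearCombination_le {S : Type*} (hlam : ∀ z, 0 ≤ lam (w z))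
    (ψ : S → Z →₀ ℂ) (v : S →₀ ℂ) :
    wSeminorm w lam (Finsupp.linearCombination ℂ ψ v)
      ≤ v.sum fun s c => ‖c‖ * wSeminorm w lam (ψ s) := by
  rw [Finsupp.linearCombination_apply, Finsupp.sum, Finsupp.sum]
  refine (Finset.le_sum_of_subadditive _ wSeminorm_zero.le (wSeminorm_add_le hlam) _ _).trans ?_
  exact (Finset.sum_congr rfl fun s _ => wSeminorm_smul _ _).le

end WeightedSeminorm

section FillingSeminorm

variable {S T : Type*} {wT : T → ℝ} {lam : ℝ → ℝ} {W₀ : Submodule ℂ (T →₀ ℂ)}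

theorem fillSeminorm_le (hlam : ∀ t, 0 ≤ lam (wT t)) {x : T →₀ ℂ} {u : (T →₀ ℂ) ⧸ W₀}
    (hx : Submodule.Quotient.mk x = u) : fillSeminorm wT lam W₀ u ≤ wSeminorm wT lam x :=
  csInf_le ⟨0, by rintro r ⟨y, -, rfl⟩; exact wSeminorm_nonneg hlam y⟩ ⟨x, hx, rfl⟩

theorem fillSeminorm_le_of_lift_single (hlam : ∀ t, 0 ≤ lam (wT t))
    (𝔥 : (S →₀ ℂ) →ₗ[ℂ] (T →₀ ℂ) ⧸ W₀) (ψ : S → T →₀ ℂ)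
    (hψ : ∀ z, Submodule.Quotient.mk (ψ z) = 𝔥 (Finsupp.single z 1))
    {wS : S → ℝ} {μ : ℝ → ℝ} (hψμ : ∀ z, wSeminorm wT lam (ψ z) ≤ μ (wS z)) (v : S →₀ ℂ) :
    fillSeminorm wT lam W₀ (𝔥 v) ≤ wSeminorm wS μ v := by
  have hlift : W₀.mkQ ∘ₗ Finsupp.linearCombination ℂ ψ = 𝔥 :=
    Finsupp.lhom_ext fun z c => by
      rw [LinearMap.comp_apply, Finsupp.linearCombination_single, Submodule.mkQ_apply,
        Submodule.Quotient.mk_smul, hψ, ← map_smul, Finsupp.smul_single_one]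
  calc fillSeminorm wT lam W₀ (𝔥 v)
      ≤ wSeminorm wT lam (Finsupp.linearCombination ℂ ψ v) :=
        fillSeminorm_le hlam (LinearMap.congr_fun hlift v)
    _ ≤ v.sum fun z c => ‖c‖ * wSeminorm wT lam (ψ z) := wSeminorm_linearCombination_le hlam ψ v
    _ ≤ wSeminorm wS μ v :=
        Finset.sum_le_sum fun z _ => mul_le_mul_of_nonneg_left (hψμ z) (norm_nonneg _)

end FillingSeminorm

theorem BoundingClass.exists_wSeminorm_translate_le (B : BoundingClass)
    {G T : Type*} [Group G] [MulAction G T] (L : G → ℝ) (wT : T → ℝ)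
    (hwT_nonneg : ∀ t, 0 ≤ wT t) {D₁ : ℝ} (hD₁ : 0 ≤ D₁)
    (hD₁T : ∀ (g : G) (t : T), wT (g • t) ≤ D₁ * L g + wT t) (D₂ D₃ : ℝ)
    {lam : ℝ → ℝ} (hlam : lam ∈ B.carrier) (x : T →₀ ℂ) :
    ∃ h ∈ B.carrier, ∀ (g : G) (y : ℝ), 0 ≤ y → L g ≤ D₂ * y + D₃ →
      wSeminorm wT lam (Finsupp.mapDomain (fun t => g • t) x) ≤ h y := by
  set C := ∑ t ∈ x.support, wT t
  obtain ⟨h₀, hh₀, hlam_le⟩ := B.exists_comp_le_of_le_affine hlam (D₁ * D₂) (D₁ * D₃ + C)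
  obtain ⟨h, hh, hh₀_le⟩ := B.exists_const_mul_le hh₀ (x.sum fun _ a => ‖a‖)
  refine ⟨h, hh, fun g y hy hLg => ?_⟩
  rw [wSeminorm_mapDomain (MulAction.injective g)]
  refine (wSeminorm_le_mul fun t ht => hlam_le y hy _ (hwT_nonneg _) ?_).trans (hh₀_le y hy)
  have hC : wT t ≤ C := Finset.single_le_sum (fun t _ => hwT_nonneg t) ht
  have hD : D₁ * L g ≤ D₁ * (D₂ * y + D₃) := mul_le_mul_of_nonneg_left hLg hD₁
  linarith [hD₁T g t]

theorem equivariant_map_to_quotient_bounded_general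
    (B : BoundingClass)
    {G : Type*} [Group G] (L : G → ℝ)
    {S T : Type*} [MulAction G S] [MulAction G T]
    (wS : S → ℝ) (wT : T → ℝ)
    (hwS_nonneg : ∀ x, 0 ≤ wS x) (hwT_nonneg : ∀ x, 0 ≤ wT x)
    -- a complete, weight-minimizing set of orbit representatives of `S/G`
    (N : ℕ) (s : Fin N → S)
    (hcomplete : ∀ x : S, ∃ (j : Fin N) (g : G), g • s j = x)
    -- the constants `D₁, D₂, D₃`
    (D₁ D₂ D₃ : ℝ) (hD₁ : 0 ≤ D₁)
    (hD₁T : ∀ (g : G) (z : T), wT (g • z) ≤ D₁ * L g + wT z)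
    (hD₂₃ : ∀ (j : Fin N) (g : G), L g ≤ D₂ * wS (g • s j) + D₃)
    -- a `G`-invariant submodule `W₀` of `W = ℂ[T]`
    (W₀ : Submodule ℂ (T →₀ ℂ))
    -- an arbitrary `G`-equivariant linear map into the quotient `W'' = W/W₀`
    (𝔥 : (S →₀ ℂ) →ₗ[ℂ] ((T →₀ ℂ) ⧸ W₀))
    (hequiv : ∀ (g : G) (v : S →₀ ℂ) (x : T →₀ ℂ),
      Submodule.Quotient.mk x = 𝔥 v →
        𝔥 (Finsupp.mapDomain (fun z => g • z) v)
          = Submodule.Quotient.mk (Finsupp.mapDomain (fun t => g • t) x)) :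
    ∀ lam ∈ B.carrier, ∃ lam' ∈ B.carrier,
      ∀ v : S →₀ ℂ, fillSeminorm wT lam W₀ (𝔥 v) ≤ wSeminorm wS lam' v := by
  intro lam hlam
  choose x hx using fun j => Submodule.Quotient.mk_surjective W₀ (𝔥 (Finsupp.single (s j) 1))
  choose h hh hbound using fun j =>
    B.exists_wSeminorm_translate_le L wT hwT_nonneg hD₁ hD₁T D₂ D₃ hlam (x j)
  obtain ⟨lam', hlam', hle⟩ := B.exists_forall_le h hh
  choose j g hg using hcomplete
  refine ⟨lam', hlam', fillSeminorm_le_of_lift_single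
    (fun t => (B.pos lam hlam _ (hwT_nonneg t)).le) 𝔥
    (fun z => Finsupp.mapDomain (fun t => g z • t) (x (j z))) (fun z => ?_) (fun z => ?_)⟩
  · rw [← hequiv (g z) _ _ (hx (j z)), Finsupp.mapDomain_single, hg]
  · refine (hbound (j z) (g z) (wS z) (hwS_nonneg z) ?_).trans (hle _ _ (hwS_nonneg z))
    simpa only [hg] using hD₂₃ (j z) (g z)

/-- in the setting of STATEMENT 9, if `W₀ ⊆ ℂ[T]` is a `G`-submodule
with quotient `W'' = ℂ[T]/W₀` carrying the filling seminorms, then every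
`G`-equivariant linear map `𝔥 : ℂ[S] → W''` is `𝓑`-bounded: for every `λ ∈ 𝓑` there
is `λ' ∈ 𝓑` with `‖𝔥 v‖_{f,λ} ≤ ‖v‖_{λ'}` for all `v`. -/
theorem equivariant_map_to_quotient_bounded
    (B : BoundingClass)
    {G : Type*} [Group G] (L : G → ℝ)
    (hL_nonneg : ∀ g : G, 0 ≤ L g)
    (hL_sub : ∀ g h : G, L (g * h) ≤ L g + L h)
    (hL_inv : ∀ g : G, L g⁻¹ = L g)
    {S T : Type*} [MulAction G S] [MulAction G T]
    (hfreeS : ∀ (g : G) (x : S), g • x = x → g = 1)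
    (hfreeT : ∀ (g : G) (x : T), g • x = x → g = 1)
    (wS : S → ℝ) (wT : T → ℝ)
    (hwS_nonneg : ∀ x, 0 ≤ wS x) (hwT_nonneg : ∀ x, 0 ≤ wT x)
    -- a complete, weight-minimizing set of orbit representatives of `S/G`
    (N : ℕ) (s : Fin N → S)
    (hcomplete : ∀ x : S, ∃ (j : Fin N) (g : G), g • s j = x)
    (hdistinct : ∀ (j j' : Fin N) (g : G), g • s j = s j' → j = j')
    (hmin : ∀ (j : Fin N) (g : G), wS (s j) ≤ wS (g • s j))
    -- the constants `D₁, D₂, D₃`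
    (D₁ D₂ D₃ : ℝ) (hD₁ : 0 ≤ D₁) (hD₂ : 0 ≤ D₂) (hD₃ : 0 ≤ D₃)
    (hD₁S : ∀ (g : G) (z : S), wS (g • z) ≤ D₁ * L g + wS z)
    (hD₁T : ∀ (g : G) (z : T), wT (g • z) ≤ D₁ * L g + wT z)
    (hD₂₃ : ∀ (j : Fin N) (g : G), L g ≤ D₂ * wS (g • s j) + D₃)
    -- a `G`-invariant submodule `W₀` of `W = ℂ[T]`
    (W₀ : Submodule ℂ (T →₀ ℂ))
    (hW₀ : ∀ (g : G) (x : T →₀ ℂ), x ∈ W₀ → Finsupp.mapDomain (fun t => g • t) x ∈ W₀)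
    -- an arbitrary `G`-equivariant linear map into the quotient `W'' = W/W₀`
    (𝔥 : (S →₀ ℂ) →ₗ[ℂ] ((T →₀ ℂ) ⧸ W₀))
    (hequiv : ∀ (g : G) (v : S →₀ ℂ) (x : T →₀ ℂ),
      Submodule.Quotient.mk x = 𝔥 v →
        𝔥 (Finsupp.mapDomain (fun z => g • z) v)
          = Submodule.Quotient.mk (Finsupp.mapDomain (fun t => g • t) x)) :
    ∀ lam ∈ B.carrier, ∃ lam' ∈ B.carrier,
      ∀ v : S →₀ ℂ, fillSeminorm wT lam W₀ (𝔥 v) ≤ wSeminorm wS lam' v :=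
  equivariant_map_to_quotient_bounded_general B L wS wT hwS_nonneg hwT_nonneg N s hcomplete D₁ D₂ D₃
    hD₁ hD₁T hD₂₃ W₀ 𝔥 hequiv
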